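/- arXiv:1707.09339 — 2 statements merged into one kernel-verified Lean document; each statement's English description precedes it below -/
import Mathlib

section
/- Let A ⊆ B be a unital C*-inclusion and suppose E : B → A is a conditional expectation which is unique (every conditional expectation F : B → A equals E) and faithful. Then the relative commutant of A in B equals the center of A; in particular, every x ∈ B satisfying x a = a x for all a ∈ A belongs to A. -/
open Matrix in
/-- A conditional expectation for a unital C*-inclusion `A ⊆ B`: a bounded linear map
`E : B → B` taking values in `A`, restricting to the identity on `A`, `A`-bimodular, and
completely positive (positive matrices over `B` are sent to positive matrices). -/
structure IsCondExp {B : Type*} [CStarAlgebra B]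
    (A : StarSubalgebra ℂ B) (E : B → B) : Prop where
  boundedLinear : IsBoundedLinearMap ℂ E
  mem_of : ∀ x : B, E x ∈ A
  fixes : ∀ a ∈ A, E a = a
  bimodular : ∀ (x : B), ∀ a ∈ A, ∀ b ∈ A, E (a * x * b) = a * E x * b
  completelyPositive : ∀ (n : ℕ) (M : Matrix (Fin n) (Fin n) B),
    (∃ N : Matrix (Fin n) (Fin n) B, M = Nᴴ * N) →
      ∃ P : Matrix (Fin n) (Fin n) B, M.map E = Pᴴ * P

/-!
If `y` commutes with `A`, is normal and `1 ≤ y⋆y`, then `e = E(y⋆y)` lies in the center of `A`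
and `e ≥ 1`, so `b ↦ e^{-1/2} E(y⋆ b y) e^{-1/2}` is again a conditional expectation. By
uniqueness it is `E`, which yields `E((y⋆y)²) = E(y⋆y)²`; faithfulness applied to
`y⋆y - E(y⋆y)` then gives `y⋆y ∈ A`. Taking `y = k + i` and `y = k + 1 + i` for a
self-adjoint `k` commuting with `A` shows `k ∈ A`, and real and imaginary parts reduce the
general case to this one.
-/

open Matrix ComplexStarModule

theorem StarSubalgebra.mem_centralizer_iff_forall_mul_comm {B : Type*} [Ring B] [StarRing B]
    [Algebra ℂ B] [StarModule ℂ B] {A : StarSubalgebra ℂ B} {x : B} :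
    x ∈ StarSubalgebra.centralizer ℂ (A : Set B) ↔ ∀ a ∈ A, x * a = a * x := by
  rw [StarSubalgebra.mem_centralizer_iff]
  exact ⟨fun h a ha => (h a ha).1.symm,
    fun h a ha => ⟨(h a ha).symm, (h (star a) (star_mem ha)).symm⟩⟩

theorem StarSubalgebra.exists_star_mul_mul_eq_one {B : Type*} [CStarAlgebra B] [PartialOrder B]
    [StarOrderedRing B] {S : StarSubalgebra ℂ B} (hS : IsClosed (S : Set B)) {e : B}
    (he : e ∈ S) (he1 : 1 ≤ e) : ∃ g ∈ S, star g * e * g = 1 := by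
  have hesa : IsSelfAdjoint e := .of_nonneg (zero_le_one.trans he1)
  have hspec : ∀ t ∈ spectrum ℝ e, 1 ≤ t := (CFC.one_le_iff e).1 he1
  have hsqrt : ∀ t ∈ spectrum ℝ e, Real.sqrt t ≠ 0 := fun t ht =>
    (Real.sqrt_pos.2 (zero_lt_one.trans_le (hspec t ht))).ne'
  have hcont : ContinuousOn (fun t : ℝ => (Real.sqrt t)⁻¹) (spectrum ℝ e) :=
    Real.continuous_sqrt.continuousOn.inv₀ hsqrt
  refine ⟨cfc (fun t : ℝ => (Real.sqrt t)⁻¹) e, cfc_mem (hs := hS) _ he, ?_⟩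
  rw [(cfc_predicate _ e : IsSelfAdjoint _).star_eq]
  nth_rw 2 [← cfc_id ℝ e]
  rw [← cfc_mul _ _ e hcont continuousOn_id,
    ← cfc_mul (fun t => (Real.sqrt t)⁻¹ * id t) _ e (hcont.mul continuousOn_id) hcont,
    ← cfc_const_one ℝ e]
  refine cfc_congr fun t ht => ?_
  have ht0 : 0 < t := zero_lt_one.trans_le (hspec t ht)
  rw [id, mul_right_comm, ← mul_inv, Real.mul_self_sqrt ht0.le, inv_mul_cancel₀ ht0.ne']

def IsCompletelyPositive {R : Type*} [Semiring R] [StarRing R] (Φ : R → R) : Prop :=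
  ∀ (n : ℕ) (M : Matrix (Fin n) (Fin n) R),
    (∃ N : Matrix (Fin n) (Fin n) R, M = Nᴴ * N) →
      ∃ P : Matrix (Fin n) (Fin n) R, M.map Φ = Pᴴ * P

theorem IsCompletelyPositive.conj {R : Type*} [Semiring R] [StarRing R] {Φ : R → R}
    (hΦ : IsCompletelyPositive Φ) (c d : R) :
    IsCompletelyPositive (fun b => star c * Φ (star d * b * d) * c) := by
  rintro n M ⟨N, rfl⟩
  set D := diagonal fun _ : Fin n => d
  set C := diagonal fun _ : Fin n => c
  obtain ⟨P, hP⟩ := hΦ n (Dᴴ * (Nᴴ * N) * D)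
    ⟨N * D, by simp only [conjTranspose_mul, Matrix.mul_assoc]⟩
  refine ⟨P * C, ?_⟩
  rw [conjTranspose_mul, Matrix.mul_assoc, ← Matrix.mul_assoc Pᴴ, ← hP]
  generalize Nᴴ * N = M
  ext i j
  simp [C, D, diagonal_conjTranspose, Pi.star_def, mul_diagonal, diagonal_mul, mul_assoc]

theorem StarSubalgebra.le_of_forall_isSelfAdjoint {B : Type*} [Ring B] [StarRing B]
    [Algebra ℂ B] [StarModule ℂ B] {S T : StarSubalgebra ℂ B}
    (h : ∀ k ∈ S, IsSelfAdjoint k → k ∈ T) : S ≤ T := by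
  intro x hx
  rw [← realPart_add_I_smul_imaginaryPart x]
  refine add_mem (h _ ?_ (ℜ x).2) (T.smul_mem (h _ ?_ (ℑ x).2) Complex.I)
  · rw [realPart_apply_coe, ← Complex.coe_smul]
    exact S.smul_mem (add_mem hx (star_mem hx)) _
  · rw [imaginaryPart_apply_coe, ← Complex.coe_smul]
    exact S.smul_mem (S.smul_mem (sub_mem hx (star_mem hx)) _) _

namespace IsCondExp

variable {B : Type*} [CStarAlgebra B] {A : StarSubalgebra ℂ B} {E : B → B}

local notation "𝒞" => StarSubalgebra.centralizer ℂ (A : Set B)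

theorem map_mul_left (hE : IsCondExp A E) {a : B} (ha : a ∈ A) (x : B) :
    E (a * x) = a * E x := by
  simpa using hE.bimodular x a ha 1 (one_mem A)

theorem map_mul_right (hE : IsCondExp A E) {a : B} (ha : a ∈ A) (x : B) :
    E (x * a) = E x * a := by
  simpa using hE.bimodular x 1 (one_mem A) a ha

theorem nonneg [PartialOrder B] [StarOrderedRing B] (hE : IsCondExp A E) {x : B} (hx : 0 ≤ x) :
    0 ≤ E x := by
  obtain ⟨s, rfl⟩ := CStarAlgebra.nonneg_iff_eq_star_mul_self.1 hx
  obtain ⟨P, hP⟩ := hE.completelyPositive 1 (of fun _ _ => star s * s) ⟨of fun _ _ => s, by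
    ext i j
    simp [mul_apply]⟩
  have h00 := congrFun (congrFun hP 0) 0
  simp only [map_apply, of_apply, mul_apply, conjTranspose_apply, Finset.univ_unique,
    Finset.sum_singleton] at h00
  rw [h00]
  exact star_mul_self_nonneg _

theorem map_mem_centralizer (hE : IsCondExp A E) {x : B} (hx : x ∈ 𝒞) : E x ∈ 𝒞 := by
  rw [StarSubalgebra.mem_centralizer_iff_forall_mul_comm] at hx ⊢
  intro a ha
  rw [← hE.map_mul_right ha, hx a ha, hE.map_mul_left ha]

theorem conj (hE : IsCondExp A E) {g y : B} (hg : g ∈ A ⊓ 𝒞) (hy : y ∈ 𝒞)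
    (hgy : star g * E (star y * y) * g = 1) :
    IsCondExp A (fun b => star g * E (star y * b * y) * g) := by
  have hgA : g ∈ A := hg.1
  have hg₁ := StarSubalgebra.mem_centralizer_iff_forall_mul_comm.1 hg.2
  have hg' := StarSubalgebra.mem_centralizer_iff_forall_mul_comm.1 (star_mem hg.2)
  have hy₁ := StarSubalgebra.mem_centralizer_iff_forall_mul_comm.1 hy
  have hy' := StarSubalgebra.mem_centralizer_iff_forall_mul_comm.1 (star_mem hy)
  refine ⟨?_, fun x => ?_, fun a ha => ?_, fun x a ha b hb => ?_,
    IsCompletelyPositive.conj hE.completelyPositive g y⟩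
  · exact (ContinuousLinearMap.mulLeftRight ℂ B (star g) g).isBoundedLinearMap.comp
      (hE.boundedLinear.comp (ContinuousLinearMap.mulLeftRight ℂ B (star y) y).isBoundedLinearMap)
  · exact mul_mem (mul_mem (star_mem hgA) (hE.mem_of _)) hgA
  · calc star g * E (star y * a * y) * g = star g * E (a * (star y * y)) * g := by
          rw [hy' a ha, mul_assoc a]
      _ = a * (star g * E (star y * y) * g) := by
          rw [hE.map_mul_left ha, ← mul_assoc, hg' a ha, mul_assoc a, mul_assoc a]
      _ = a := by rw [hgy, mul_one]
  · calc star g * E (star y * (a * x * b) * y) * g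
          = star g * E (a * (star y * x * y) * b) * g := by
          simp only [← mul_assoc, hy' a ha]; simp only [mul_assoc, hy₁ b hb]
      _ = a * (star g * E (star y * x * y) * g) * b := by
          rw [hE.bimodular _ a ha b hb]
          simp only [← mul_assoc, hg' a ha]; simp only [mul_assoc, hg₁ b hb]

theorem mem_of_map_star_mul_self_eq (hE : IsCondExp A E)
    (hfaithful : ∀ x : B, E (star x * x) = 0 → x = 0) {x : B}
    (hx : E (star x * x) = E (star x) * E x) : x ∈ A := by
  have hEx : E x ∈ A := hE.mem_of x
  have hlin := hE.boundedLinear.toIsLinearMap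
  have hexpand : star (x - E x) * (x - E x)
      = star x * x - star x * E x - star (E x) * x + star (E x) * E x := by
    rw [star_sub]; noncomm_ring
  have hdev : E (star (x - E x) * (x - E x)) = 0 := by
    rw [hexpand, hlin.map_add, hlin.map_sub, hlin.map_sub, hx, hE.map_mul_right hEx,
      hE.map_mul_left (star_mem hEx), hE.fixes _ (mul_mem (star_mem hEx) hEx)]
    abel
  rw [sub_eq_zero.1 (hfaithful _ hdev)]
  exact hEx

variable [PartialOrder B] [StarOrderedRing B]

theorem map_conj_star_mul_self_eq_sq (hA : IsClosed (A : Set B)) (hE : IsCondExp A E)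
    (huniq : ∀ F : B → B, IsCondExp A F → F = E) {y : B} (hy : y ∈ 𝒞)
    (hy1 : 1 ≤ star y * y) :
    E (star y * (star y * y) * y) = E (star y * y) * E (star y * y) := by
  set e := E (star y * y)
  have he1 : 1 ≤ e := by
    have := hE.nonneg (sub_nonneg.2 hy1)
    rwa [hE.boundedLinear.toIsLinearMap.map_sub, hE.fixes 1 (one_mem A), sub_nonneg] at this
  have heZ : e ∈ A ⊓ 𝒞 :=
    ⟨hE.mem_of _, hE.map_mem_centralizer (mul_mem (star_mem hy) hy)⟩
  obtain ⟨g, hgZ, hgeg⟩ :=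
    StarSubalgebra.exists_star_mul_mul_eq_one (hA.inter (Set.isClosed_centralizer _)) heZ he1
  have hF := congrFun (huniq _ (hE.conj hgZ hy hgeg)) (star y * y)
  set X := E (star y * (star y * y) * y)
  have hX : X ∈ A := hE.mem_of _
  have hg := StarSubalgebra.mem_centralizer_iff_forall_mul_comm.1 hgZ.2
  have hg' := StarSubalgebra.mem_centralizer_iff_forall_mul_comm.1 (star_mem hgZ.2)
  have he_inv : e * (star g * g) = 1 := by
    rw [← hgeg, ← mul_assoc, ← hg' e heZ.1]
  calc X = e * (star g * g) * X := by rw [he_inv, one_mul]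
    _ = e * (star g * X * g) := by rw [mul_assoc, mul_assoc, mul_assoc, hg X hX]
    _ = e * e := by rw [hF]

theorem star_mul_self_mem (hA : IsClosed (A : Set B)) (hE : IsCondExp A E)
    (huniq : ∀ F : B → B, IsCondExp A F → F = E)
    (hfaithful : ∀ x : B, E (star x * x) = 0 → x = 0) {y : B} [IsStarNormal y] (hy : y ∈ 𝒞)
    (hy1 : 1 ≤ star y * y) : star y * y ∈ A := by
  have hnormal : star y * y * (star y * y) = star y * (star y * y) * y := by
    rw [mul_assoc, ← mul_assoc y, ← star_comm_self' y]
    noncomm_ring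
  refine hE.mem_of_map_star_mul_self_eq hfaithful ?_
  rw [star_star_mul, hnormal]
  exact hE.map_conj_star_mul_self_eq_sq hA huniq hy hy1

theorem mul_self_mem_of_isSelfAdjoint (hA : IsClosed (A : Set B)) (hE : IsCondExp A E)
    (huniq : ∀ F : B → B, IsCondExp A F → F = E)
    (hfaithful : ∀ x : B, E (star x * x) = 0 → x = 0) {k : B} (hk : IsSelfAdjoint k)
    (hkC : k ∈ 𝒞) : k * k ∈ A := by
  set y := k + Complex.I • (1 : B)
  obtain ⟨hyy, hyy'⟩ : star y * y = k * k + 1 ∧ y * star y = k * k + 1 := by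
    simp only [y, star_add, star_smul, hk.star_eq, Complex.star_def, Complex.conj_I, star_one,
      add_mul, mul_add, smul_mul_assoc, mul_smul_comm, one_mul, mul_one, neg_smul, neg_mul,
      mul_neg, smul_add, smul_neg, smul_smul, Complex.I_mul_I, one_smul, neg_neg]
    constructor <;> abel
  have : IsStarNormal y := ⟨by rw [commute_iff_eq, hyy, hyy']⟩
  have hy1 : 1 ≤ star y * y := by
    rw [hyy]
    exact le_add_of_nonneg_left (by simpa [hk.star_eq] using star_mul_self_nonneg k)
  have hy : y ∈ 𝒞 := add_mem hkC (StarSubalgebra.smul_mem _ (one_mem _) _)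
  have hmem := hE.star_mul_self_mem hA huniq hfaithful hy hy1
  rw [hyy] at hmem
  exact (add_mem_cancel_right (one_mem A)).1 hmem

theorem mem_of_isSelfAdjoint (hA : IsClosed (A : Set B)) (hE : IsCondExp A E)
    (huniq : ∀ F : B → B, IsCondExp A F → F = E)
    (hfaithful : ∀ x : B, E (star x * x) = 0 → x = 0) {k : B} (hk : IsSelfAdjoint k)
    (hkC : k ∈ 𝒞) : k ∈ A := by
  have h2k : (2 : ℂ) • k ∈ A := by
    have hpolar : (2 : ℂ) • k = (k + 1) * (k + 1) - k * k - 1 := by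
      rw [two_smul]; noncomm_ring
    rw [hpolar]
    refine sub_mem (sub_mem ?_ (hE.mul_self_mem_of_isSelfAdjoint hA huniq hfaithful hk hkC))
      (one_mem A)
    exact hE.mul_self_mem_of_isSelfAdjoint hA huniq hfaithful (hk.add (.one B))
      (add_mem hkC (one_mem _))
  simpa [smul_smul] using A.smul_mem h2k (2⁻¹ : ℂ)

theorem centralizer_le (hA : IsClosed (A : Set B)) (hE : IsCondExp A E)
    (huniq : ∀ F : B → B, IsCondExp A F → F = E)
    (hfaithful : ∀ x : B, E (star x * x) = 0 → x = 0) : 𝒞 ≤ A :=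
  StarSubalgebra.le_of_forall_isSelfAdjoint fun _ hkC hk =>
    hE.mem_of_isSelfAdjoint hA huniq hfaithful hk hkC

end IsCondExp

/-- If a unital C*-inclusion `A ⊆ B` admits a unique conditional expectation `E` which is
moreover faithful, then the relative commutant `A' ∩ B` equals the center `Z(A)` of `A`;
in particular every `x ∈ B` commuting with `A` belongs to `A`. -/
theorem unique_faithful_condExp_relative_commutant_eq_center
    {B : Type*} [CStarAlgebra B] (A : StarSubalgebra ℂ B)
    (hA : IsClosed (A : Set B)) (E : B → B) (hE : IsCondExp A E)
    (huniq : ∀ F : B → B, IsCondExp A F → F = E)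
    (hfaithful : ∀ x : B, E (star x * x) = 0 → x = 0) :
    {x : B | ∀ a ∈ A, x * a = a * x} = {x : B | x ∈ A ∧ ∀ b ∈ A, x * b = b * x} := by
  let _ : PartialOrder B := CStarAlgebra.spectralOrder B
  have : StarOrderedRing B := CStarAlgebra.spectralOrderedRing B
  ext x
  refine ⟨fun hx => ⟨hE.centralizer_le hA huniq hfaithful ?_, hx⟩, And.right⟩
  exact StarSubalgebra.mem_centralizer_iff_forall_mul_comm.2 hx
end

section
/- Let A ⊆ B be a unital C*-inclusion, G a group, and u : G → B a map into the unitaries of B with u(e) = 1 and u(g) u(h) = u(g h), such that u(g) a u(g)* ∈ A for all a ∈ A and g ∈ G. Suppose that for every g ≠ e the only element b ∈ A satisfying b a = (u(g) a u(g)*) b for all a ∈ A is b = 0, and that B is the closed linear span of {a · u(g) : a ∈ A, g ∈ G}. Then any two conditional expectations θ₁, θ₂ : B → A are equal. -/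
namespace IsCondExp

variable {B : Type*} [CStarAlgebra B] {A : StarSubalgebra ℂ B} {E : B → B}

theorem apply_mul_of_mem_left (hE : IsCondExp A E) (x : B) {a : B} (ha : a ∈ A) :
    E (a * x) = a * E x := by
  simpa using hE.bimodular x a ha 1 (one_mem A)

theorem apply_mul_of_mem_right (hE : IsCondExp A E) (x : B) {b : B} (hb : b ∈ A) :
    E (x * b) = E x * b := by
  simpa using hE.bimodular x 1 (one_mem A) b hb

theorem apply_one (hE : IsCondExp A E) : E 1 = 1 :=
  hE.fixes 1 (one_mem A)

theorem apply_mul_eq_conj_mul_apply (hE : IsCondExp A E) {w : B} (hw : star w * w = 1)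
    (hwA : ∀ a ∈ A, w * a * star w ∈ A) {a : B} (ha : a ∈ A) :
    E w * a = (w * a * star w) * E w := by
  calc E w * a = E (w * a) := (hE.apply_mul_of_mem_right w ha).symm
    _ = E ((w * a * star w) * w) := by rw [mul_assoc, hw, mul_one]
    _ = (w * a * star w) * E w := hE.apply_mul_of_mem_left w (hwA a ha)

theorem apply_eq_zero_of_free (hE : IsCondExp A E) {w : B} (hw : star w * w = 1)
    (hwA : ∀ a ∈ A, w * a * star w ∈ A)
    (hfree : ∀ b ∈ A, (∀ a ∈ A, b * a = (w * a * star w) * b) → b = 0) :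
    E w = 0 :=
  hfree (E w) (hE.mem_of w) fun _ ha => hE.apply_mul_eq_conj_mul_apply hw hwA ha

theorem eq_of_eqOn_of_dense_span {E' : B → B} (hE : IsCondExp A E) (hE' : IsCondExp A E')
    {s : Set B} (hs : Dense (Submodule.span ℂ s : Set B)) (h : Set.EqOn E E' s) : E = E' :=
  congrArg DFunLike.coe <|
    ContinuousLinearMap.ext_on (f := hE.boundedLinear.toContinuousLinearMap)
      (g := hE'.boundedLinear.toContinuousLinearMap) hs h

end IsCondExp

theorem condExp_unique_of_free_unitary_action_general
    {B : Type*} [CStarAlgebra B] (A : StarSubalgebra ℂ B)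
    {G : Type*} [Group G] (u : G → B)
    (huu : ∀ g : G, star (u g) * u g = 1 ∧ u g * star (u g) = 1)
    (hone : u 1 = 1)
    (hnorm : ∀ g : G, ∀ a ∈ A, u g * a * star (u g) ∈ A)
    (hfree : ∀ g : G, g ≠ 1 → ∀ b ∈ A,
      (∀ a ∈ A, b * a = (u g * a * star (u g)) * b) → b = 0)
    (hspan : (Submodule.span ℂ {x : B | ∃ a ∈ A, ∃ g : G, x = a * u g}).topologicalClosure = ⊤)
    (θ₁ θ₂ : B → B) (hθ₁ : IsCondExp A θ₁) (hθ₂ : IsCondExp A θ₂) :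
    θ₁ = θ₂ := by
  classical
  have apply_generator : ∀ θ : B → B, IsCondExp A θ → ∀ a ∈ A, ∀ g : G,
      θ (a * u g) = if g = 1 then a else 0 := by
    intro θ hθ a ha g
    rw [hθ.apply_mul_of_mem_left _ ha]
    split_ifs with hg
    · rw [hg, hone, hθ.apply_one, mul_one]
    · rw [hθ.apply_eq_zero_of_free (huu g).1 (hnorm g) (hfree g hg), mul_zero]
  refine hθ₁.eq_of_eqOn_of_dense_span hθ₂
    (Submodule.dense_iff_topologicalClosure_eq_top.mpr hspan) ?_
  rintro _ ⟨a, ha, g, rfl⟩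
  rw [apply_generator θ₁ hθ₁ a ha g, apply_generator θ₂ hθ₂ a ha g]

/-- Let `u : G → B` be a unitary representation of a group `G` in `B` normalizing `A`, such
that for every `g ≠ e` the inner automorphism `a ↦ u g * a * (u g)*` of `A` has no nonzero
dependent elements in `A`, and such that `B` is the closed linear span of `{a * u g}`. Then
any two conditional expectations `B → A` coincide. -/
theorem condExp_unique_of_free_unitary_action
    {B : Type*} [CStarAlgebra B] (A : StarSubalgebra ℂ B) (hA : IsClosed (A : Set B))
    {G : Type*} [Group G] (u : G → B)
    (huu : ∀ g : G, star (u g) * u g = 1 ∧ u g * star (u g) = 1)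
    (hone : u 1 = 1) (hmul : ∀ g h : G, u g * u h = u (g * h))
    (hnorm : ∀ g : G, ∀ a ∈ A, u g * a * star (u g) ∈ A)
    (hfree : ∀ g : G, g ≠ 1 → ∀ b ∈ A,
      (∀ a ∈ A, b * a = (u g * a * star (u g)) * b) → b = 0)
    (hspan : (Submodule.span ℂ {x : B | ∃ a ∈ A, ∃ g : G, x = a * u g}).topologicalClosure = ⊤)
    (θ₁ θ₂ : B → B) (hθ₁ : IsCondExp A θ₁) (hθ₂ : IsCondExp A θ₂) :
    θ₁ = θ₂ :=
  condExp_unique_of_free_unitary_action_general A u huu hone hnorm hfree hspan θ₁ θ₂ hθ₁ hθ₂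
end
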